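/- Suppose α : ℤ^d → (0,1) is such that ν_α is stationary for the translation-invariant exclusion process on ℤ^d, and u ∈ ℤ^d satisfies p(u) > 0. (a) If p(−u) = 0, then π(x+u) = π(x) for all x ∈ ℤ^d. (b) If p(−u) > 0, then, setting λ = p(u)/p(−u), for each x ∈ ℤ^d either π(x+nu) = π(x) for all n ∈ ℤ, or π(x+nu) = π(x)·λⁿ for all n ∈ ℤ. -/

import Mathlib

/-!
Testing stationarity against the indicator that a finite set `S` is fully occupied shows that,
under `ν_α`, particles jump into `S` at the same rate as they jump out of it (`flux_balance`);
the integral of the generator is computed by dominated convergence, since a cylinder function is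
bounded and only jumps touching its support change it. For `S = {w}` and `S = {v, w}` this gives,
for every pair of sites, `α v = α w` or detailed balance `p (w - v) π v = p (v - w) π w`. Hence
`π` is harmonic, `∑ y, p (x - y) π y = π x`, and along `u` each ratio `π (y + u) / π y` is `1`
or `λ`. All terms of `∑ y, p (x - y) (π (y + u) - π y) = π (x + u) - π x` have the sign of
`λ - 1`, so a ratio `1` at `x` forces ratio `1` at `x ± u`: on each line `x + ℤ u` the ratio is
constant.
-/

open MeasureTheory Filter Topology

namespace ExclusionPaper

abbrev Zd (d : ℕ) := Fin d → ℤ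

abbrev Conf (d : ℕ) := Zd d → Bool

noncomputable def ind (b : Bool) : ℝ := if b then 1 else 0

def swap {d : ℕ} (η : Conf d) (x y : Zd d) : Conf d :=
  fun z => if z = x then η y else if z = y then η x else η z

def IsCylinder {d : ℕ} (f : Conf d → ℝ) : Prop :=
  ∃ F : Finset (Zd d), ∀ η η' : Conf d, (∀ x ∈ F, η x = η' x) → f η = f η'

noncomputable def gen {d : ℕ} (p : Zd d → ℝ) (f : Conf d → ℝ) (η : Conf d) : ℝ :=
  ∑' x : Zd d, ∑' y : Zd d,
    p (y - x) * ind (η x) * (1 - ind (η y)) * (f (swap η x y) - f η)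

def IsStationary {d : ℕ} (p : Zd d → ℝ) (μ : Measure (Conf d)) : Prop :=
  ∀ f : Conf d → ℝ, IsCylinder f → ∫ η, gen p f η ∂μ = 0

def IsProductWith {d : ℕ} (α : Zd d → ℝ) (μ : Measure (Conf d)) : Prop :=
  IsProbabilityMeasure μ ∧
  ∀ F : Finset (Zd d), ∀ b : Zd d → Bool,
    μ {η : Conf d | ∀ x ∈ F, η x = b x} =
      ∏ x ∈ F, ENNReal.ofReal (if b x then α x else 1 - α x)

noncomputable def pifun {d : ℕ} (α : Zd d → ℝ) (x : Zd d) : ℝ := α x / (1 - α x)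

def innerZ {d : ℕ} (x y : Zd d) : ℤ := ∑ i, x i * y i

noncomputable def innerR {d : ℕ} (x : Zd d) (v : Fin d → ℝ) : ℝ := ∑ i, (x i : ℝ) * v i

section Configurations

variable {d : ℕ}

lemma swap_apply_left (η : Conf d) (x y : Zd d) : swap η x y x = η y := by
  simp [swap]

lemma swap_apply_right (η : Conf d) (x y : Zd d) : swap η x y y = η x := by
  by_cases h : y = x <;> simp [swap, h]

lemma swap_apply_of_ne (η : Conf d) {x y z : Zd d} (hx : z ≠ x) (hy : z ≠ y) :
    swap η x y z = η z := by
  simp [swap, hx, hy]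

lemma swap_self (η : Conf d) (x : Zd d) : swap η x x = η := by
  funext z
  by_cases h : z = x <;> simp [swap, h]

lemma measurable_eval (x : Zd d) : Measurable fun η : Conf d => η x :=
  measurable_pi_apply x

lemma measurable_swap (x y : Zd d) : Measurable fun η : Conf d => swap η x y :=
  measurable_pi_lambda _ fun z => by
    by_cases hx : z = x
    · simpa [swap, hx] using measurable_eval y
    · by_cases hy : z = y
      · subst hy
        simpa [swap, hx] using measurable_eval x
      · simpa [swap, hx, hy] using measurable_eval z

lemma abs_ind_mul_one_sub_ind_le_one (a b : Bool) : |ind a * (1 - ind b)| ≤ 1 := by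
  cases a <;> cases b <;> norm_num [ind]

lemma IsCylinder.exists_factor {f : Conf d → ℝ} (hf : IsCylinder f) :
    ∃ (F : Finset (Zd d)) (g : (F → Bool) → ℝ), ∀ η, f η = g fun z => η z := by
  obtain ⟨F, hF⟩ := hf
  refine ⟨F, fun b => f fun z => if h : z ∈ F then b ⟨z, h⟩ else false, fun η => ?_⟩
  exact hF _ _ fun z hz => by simp [hz]

lemma IsCylinder.measurable {f : Conf d → ℝ} (hf : IsCylinder f) : Measurable f := by
  obtain ⟨F, g, hg⟩ := hf.exists_factor
  rw [funext hg]
  exact (measurable_of_finite g).comp (measurable_pi_lambda _ fun z => measurable_pi_apply _)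

lemma IsCylinder.exists_abs_le {f : Conf d → ℝ} (hf : IsCylinder f) : ∃ M, ∀ η, |f η| ≤ M := by
  obtain ⟨F, g, hg⟩ := hf.exists_factor
  obtain ⟨M, hM⟩ := (Set.finite_range fun b => |g b|).bddAbove
  exact ⟨M, fun η => hg η ▸ hM ⟨_, rfl⟩⟩

end Configurations

section Interchange

variable {Ω ι E : Type*} [MeasurableSpace Ω] {μ : Measure Ω} [Countable ι]
  [NormedAddCommGroup E] [CompleteSpace E]
  {F : ι → Ω → E} {b : ι → ℝ}

lemma aestronglyMeasurable_tsum_of_norm_le (hF : ∀ i, AEStronglyMeasurable (F i) μ)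
    (hb : Summable b) (hFb : ∀ i ω, ‖F i ω‖ ≤ b i) :
    AEStronglyMeasurable (fun ω => ∑' i, F i ω) μ :=
  aestronglyMeasurable_of_tendsto_ae atTop
    (fun s => Finset.aestronglyMeasurable_fun_sum s fun i _ => hF i)
    (ae_of_all _ fun ω => (hb.of_norm_bounded fun i => hFb i ω).hasSum)

lemma hasSum_integral_of_norm_le [NormedSpace ℝ E] [IsFiniteMeasure μ]
    (hF : ∀ i, AEStronglyMeasurable (F i) μ)
    (hb : Summable b) (hFb : ∀ i ω, ‖F i ω‖ ≤ b i) :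
    HasSum (fun i => ∫ ω, F i ω ∂μ) (∫ ω, ∑' i, F i ω ∂μ) :=
  hasSum_integral_of_dominated_convergence (fun i _ => b i) hF
    (fun i => ae_of_all _ (hFb i)) (ae_of_all _ fun _ => hb) (integrable_const _)
    (ae_of_all _ fun ω => (hb.of_norm_bounded fun i => hFb i ω).hasSum)

end Interchange

section Generator

variable {d : ℕ} {p : Zd d → ℝ}

lemma summable_comp_sub_left (hp : Summable p) (y : Zd d) : Summable fun x => p (y - x) :=
  (Equiv.subLeft y).summable_iff.mpr hp

lemma hasSum_comp_sub_right (hp : Summable p) (x : Zd d) :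
    HasSum (fun y => p (y - x)) (∑' z, p z) :=
  (Equiv.subRight x).hasSum_iff.mpr hp.hasSum

lemma abs_jump_le (hp0 : ∀ z, 0 ≤ p z) {f : Conf d → ℝ} {F : Finset (Zd d)}
    (hF : ∀ η η' : Conf d, (∀ x ∈ F, η x = η' x) → f η = f η') {M : ℝ} (hM : ∀ η, |f η| ≤ M)
    (x y : Zd d) (η : Conf d) :
    |p (y - x) * ind (η x) * (1 - ind (η y)) * (f (swap η x y) - f η)|
      ≤ 2 * M * ((if x ∈ F then p (y - x) else 0) + (if y ∈ F then p (y - x) else 0)) := by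
  have hM0 : 0 ≤ M := (abs_nonneg _).trans (hM η)
  have hp := hp0 (y - x)
  by_cases hxy : x ∈ F ∨ y ∈ F
  · have hdiff : |f (swap η x y) - f η| ≤ 2 * M := by
      linarith [abs_sub (f (swap η x y)) (f η), hM (swap η x y), hM η]
    calc |p (y - x) * ind (η x) * (1 - ind (η y)) * (f (swap η x y) - f η)|
        = p (y - x) * |ind (η x) * (1 - ind (η y))| * |f (swap η x y) - f η| := by
          rw [mul_assoc (p _), abs_mul, abs_mul, abs_of_nonneg hp]
      _ ≤ p (y - x) * 1 * (2 * M) := by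
          gcongr
          exact abs_ind_mul_one_sub_ind_le_one _ _
      _ ≤ _ := by rcases hxy with h | h <;> split_ifs <;> nlinarith
  · rw [not_or] at hxy
    have hfix : f (swap η x y) = f η := hF _ _ fun z hz =>
      swap_apply_of_ne η (ne_of_mem_of_not_mem hz hxy.1) (ne_of_mem_of_not_mem hz hxy.2)
    simp [hfix, hxy]

theorem integral_gen_eq_tsum {μ : Measure (Conf d)} [IsFiniteMeasure μ] (hp0 : ∀ z, 0 ≤ p z)
    (hp : Summable p) {f : Conf d → ℝ} (hf : IsCylinder f) :
    ∫ η, gen p f η ∂μ = ∑' x, ∑' y,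
      ∫ η, p (y - x) * ind (η x) * (1 - ind (η y)) * (f (swap η x y) - f η) ∂μ := by
  obtain ⟨M, hM⟩ := hf.exists_abs_le
  have hf_meas := hf.measurable
  obtain ⟨F, hF⟩ := hf
  have hB : ∀ x, HasSum (fun y => 2 * M * ((if x ∈ F then p (y - x) else 0)
      + (if y ∈ F then p (y - x) else 0)))
      (2 * M * ((if x ∈ F then ∑' z, p z else 0) + ∑ y ∈ F, p (y - x))) := fun x => by
    have hF_sum : HasSum (fun y => if y ∈ F then p (y - x) else 0) (∑ y ∈ F, p (y - x)) := by
      simpa using hasSum_sum_of_ne_finset_zero (s := F) fun y hy => if_neg hy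
    refine HasSum.mul_left _ (HasSum.add ?_ hF_sum)
    split_ifs
    exacts [hasSum_comp_sub_right hp x, hasSum_zero]
  have hb : Summable fun x => 2 * M * ((if x ∈ F then ∑' z, p z else 0) + ∑ y ∈ F, p (y - x)) :=
    ((summable_of_ne_finset_zero fun x hx => if_neg hx).add
      (summable_sum fun y _ => summable_comp_sub_left hp y)).mul_left _
  have hbound := abs_jump_le hp0 hF hM
  have hmeas : ∀ x y, AEStronglyMeasurable (fun η : Conf d =>
      p (y - x) * ind (η x) * (1 - ind (η y)) * (f (swap η x y) - f η)) μ := fun x y =>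
    have hind : ∀ z, Measurable fun η : Conf d => ind (η z) := fun z =>
      (measurable_of_countable ind).comp (measurable_eval z)
    ((((hind x).const_mul _).mul (measurable_const.sub (hind y))).mul
      ((hf_meas.comp (measurable_swap x y)).sub hf_meas)).aestronglyMeasurable
  calc ∫ η, gen p f η ∂μ
      = ∑' x, ∫ η, ∑' y, p (y - x) * ind (η x) * (1 - ind (η y)) * (f (swap η x y) - f η) ∂μ :=
        (hasSum_integral_of_norm_le
          (fun x => aestronglyMeasurable_tsum_of_norm_le (hmeas x) (hB x).summable (hbound x))
          hb fun x η => tsum_of_norm_bounded (hB x) (hbound x · η)).tsum_eq.symm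
    _ = _ := tsum_congr fun x =>
        (hasSum_integral_of_norm_le (hmeas x) (hB x).summable (hbound x)).tsum_eq.symm

end Generator

lemma prod_eq_ite_mul_prod_erase {ι M : Type*} [CommMonoid M] [DecidableEq ι] (s : Finset ι)
    (g : ι → M) (a : ι) : ∏ i ∈ s, g i = (if a ∈ s then g a else 1) * ∏ i ∈ s.erase a, g i := by
  split_ifs with h
  · exact (s.mul_prod_erase g h).symm
  · rw [Finset.erase_eq_of_notMem h, one_mul]

section Occupation

variable {d : ℕ}

noncomputable def occ (S : Finset (Zd d)) (η : Conf d) : ℝ := ∏ z ∈ S, ind (η z)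

lemma isCylinder_occ (S : Finset (Zd d)) : IsCylinder (occ S) :=
  ⟨S, fun η η' h => Finset.prod_congr rfl fun z hz => by rw [h z hz]⟩

lemma occ_swap_of_notMem (η : Conf d) {S : Finset (Zd d)} {x y : Zd d} (hx : x ∉ S) (hy : y ∉ S) :
    occ S (swap η x y) = occ S η :=
  Finset.prod_congr rfl fun z hz => by
    rw [swap_apply_of_ne η (ne_of_mem_of_not_mem hz hx) (ne_of_mem_of_not_mem hz hy)]

lemma occ_eq_of_ne (S : Finset (Zd d)) (η : Conf d) {x y : Zd d} (hxy : x ≠ y) :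
    occ S η = (if x ∈ S then ind (η x) else 1) * (if y ∈ S then ind (η y) else 1)
      * occ ((S.erase x).erase y) η := by
  simp only [occ, prod_eq_ite_mul_prod_erase S _ x, prod_eq_ite_mul_prod_erase (S.erase x) _ y,
    Finset.mem_erase, ne_eq, hxy.symm, not_false_eq_true, true_and, mul_assoc]

lemma jump_occ (S : Finset (Zd d)) (x y : Zd d) (η : Conf d) :
    ind (η x) * (1 - ind (η y)) * (occ S (swap η x y) - occ S η)
      = (if y ∈ S then ind (η x) * (1 - ind (η y)) * occ ((S.erase x).erase y) η else 0)
        - (if x ∈ S then ind (η x) * (1 - ind (η y)) * occ ((S.erase x).erase y) η else 0) := by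
  by_cases hxy : x = y
  · subst hxy
    simp [swap_self]
  rw [occ_eq_of_ne S _ hxy, occ_eq_of_ne S η hxy, occ_swap_of_notMem η (by simp) (by simp),
    swap_apply_left, swap_apply_right]
  cases η x <;> cases η y <;> by_cases hx : x ∈ S <;> by_cases hy : y ∈ S <;> simp [ind, hx, hy]

end Occupation

section ProductMeasure

variable {d : ℕ} {α : Zd d → ℝ} {μ : Measure (Conf d)}

lemma ite_ind_eq (P : Prop) [Decidable P] (b : Bool) :
    (if P then ind b else 1 - ind b) = if b = decide P then 1 else 0 := by
  by_cases hP : P <;> cases b <;> simp [ind, hP]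

lemma measurableSet_cylinder (F : Finset (Zd d)) (b : Zd d → Bool) :
    MeasurableSet {η : Conf d | ∀ z ∈ F, η z = b z} := by
  simp only [Set.ofPred_forall]
  exact Finset.measurableSet_biInter F fun z _ =>
    measurableSet_eq_fun (measurable_eval z) measurable_const

theorem IsProductWith.integral_prod (hμ : IsProductWith α μ) (hα : ∀ x, α x ∈ Set.Icc 0 1)
    (P : Zd d → Prop) [DecidablePred P] (F : Finset (Zd d)) :
    ∫ η, ∏ z ∈ F, (if P z then ind (η z) else 1 - ind (η z)) ∂μ
      = ∏ z ∈ F, (if P z then α z else 1 - α z) := by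
  have h_ind : (fun η : Conf d => ∏ z ∈ F, (if P z then ind (η z) else 1 - ind (η z)))
      = {η : Conf d | ∀ z ∈ F, η z = decide (P z)}.indicator 1 := funext fun η => by
    simp only [ite_ind_eq, Finset.prod_boole, Set.indicator_apply, Set.mem_ofPred_eq, Pi.one_apply]
  rw [h_ind, integral_indicator_one (measurableSet_cylinder F _), measureReal_def, hμ.2,
    ENNReal.toReal_prod]
  refine Finset.prod_congr rfl fun z _ => ?_
  obtain ⟨h0, h1⟩ := hα z
  by_cases hP : P z <;> simp [hP, h0, h1]

lemma IsProductWith.integral_ind_mul_occ (hμ : IsProductWith α μ) (hα : ∀ x, α x ∈ Set.Icc 0 1)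
    {T : Finset (Zd d)} {x y : Zd d} (hx : x ∉ T) (hy : y ∉ T) (hxy : x ≠ y) :
    ∫ η, ind (η x) * (1 - ind (η y)) * occ T η ∂μ = α x * (1 - α y) * ∏ z ∈ T, α z := by
  have key : ∀ g h : Zd d → ℝ, ∏ z ∈ insert x (insert y T), (if z ≠ y then g z else h z)
      = g x * h y * ∏ z ∈ T, g z := fun g h => by
    rw [Finset.prod_insert (by simp [hxy, hx]), Finset.prod_insert hy, if_pos hxy,
      if_neg (not_not.2 rfl), mul_assoc,
      Finset.prod_congr rfl fun z hz => if_pos (ne_of_mem_of_not_mem hz hy)]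
  simpa only [key, occ] using hμ.integral_prod hα (· ≠ y) (insert x (insert y T))

lemma IsProductWith.integral_jump_occ (hμ : IsProductWith α μ) (hα : ∀ x, α x ∈ Set.Icc 0 1)
    (S : Finset (Zd d)) (x y : Zd d) :
    ∫ η, ind (η x) * (1 - ind (η y)) * (occ S (swap η x y) - occ S η) ∂μ
      = (if y ∈ S then α x * (1 - α y) * ∏ z ∈ (S.erase x).erase y, α z else 0)
        - (if x ∈ S then α x * (1 - α y) * ∏ z ∈ (S.erase x).erase y, α z else 0) := by
  by_cases hxy : x = y
  · subst hxy
    simp [swap_self]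
  have hJ := hμ.integral_ind_mul_occ hα (T := (S.erase x).erase y) (by simp) (by simp) hxy
  simp_rw [jump_occ]
  split_ifs <;> simp [hJ, integral_neg]

end ProductMeasure

lemma hasSum_ite_mem {ι : Type*} [DecidableEq ι] (s : Finset ι) (f : ι → ℝ) :
    HasSum (fun i => if i ∈ s then f i else 0) (∑ i ∈ s, f i) := by
  simpa using hasSum_sum_of_ne_finset_zero (s := s) (f := fun i => if i ∈ s then f i else 0)
    fun i hi => if_neg hi

lemma summable_mul_of_mem_Icc {ι : Type*} {f g : ι → ℝ} (hf : Summable f) (hf0 : ∀ i, 0 ≤ f i)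
    (hg : ∀ i, g i ∈ Set.Icc (0 : ℝ) 1) : Summable fun i => f i * g i :=
  Summable.of_nonneg_of_le (fun i => mul_nonneg (hf0 i) (hg i).1)
    (fun i => mul_le_of_le_one_right (hf0 i) (hg i).2) hf

lemma tsum_mul_mul_ite_eq {ι : Type*} [DecidableEq ι] {f g : ι → ℝ}
    (hfg : Summable fun i => f i * g i) (a : ι) (c : ℝ) :
    ∑' i, f i * (g i * if i = a then 1 else c) = c * ∑' i, f i * g i + (1 - c) * (f a * g a) := by
  have h : ∀ i, f i * (g i * if i = a then 1 else c)
      = c * (f i * g i) + if i = a then (1 - c) * (f a * g a) else 0 := fun i => by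
    split_ifs with hi
    · subst hi
      ring
    · ring
  rw [tsum_congr h, (hfg.mul_left c).tsum_add (hasSum_ite_eq a _).summable, tsum_mul_left,
    tsum_ite_eq]

lemma prod_erase_erase_pair {d : ℕ} (α : Zd d → ℝ) {v w : Zd d} (hvw : v ≠ w) (x y : Zd d) :
    ∏ z ∈ (({v, w} : Finset (Zd d)).erase x).erase y, α z
      = (if x = v ∨ y = v then 1 else α v) * (if x = w ∨ y = w then 1 else α w) := by
  by_cases hxv : x = v <;> by_cases hyv : y = v <;> by_cases hxw : x = w <;>
    by_cases hyw : y = w <;> simp_all [Finset.erase_insert_of_ne, Finset.erase_singleton]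

section Flux

variable {d : ℕ} {p α : Zd d → ℝ} {μ : Measure (Conf d)}
  (hp0 : ∀ z, 0 ≤ p z) (hp : Summable p) (hα : ∀ x, α x ∈ Set.Icc 0 1)
  (hμ : IsProductWith α μ) (hstat : IsStationary p μ)

include hp0 hp hα hμ hstat in
/-- For `x ≠ y`, `α x * (1 - α y) * ∏ z ∈ (S.erase x).erase y, α z` is the `ν_α`-probability that
`x` is occupied, `y` is empty and the rest of `S` is occupied. So the left side is the rate of jumps
into `S` and the right side the rate of jumps out of `S`, up to jumps inside `S` and the junk terms
`x = y`, which occur on both sides. -/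
theorem flux_balance (S : Finset (Zd d)) :
    ∑ y ∈ S, ∑' x, p (y - x) * (α x * (1 - α y) * ∏ z ∈ (S.erase x).erase y, α z)
      = ∑ x ∈ S, ∑' y, p (y - x) * (α x * (1 - α y) * ∏ z ∈ (S.erase x).erase y, α z) := by
  have := hμ.1
  obtain ⟨w, hw⟩ : ∃ w : Zd d → Zd d → ℝ,
      w = fun x y => p (y - x) * (α x * (1 - α y) * ∏ z ∈ (S.erase x).erase y, α z) := ⟨_, rfl⟩
  have hQ : ∀ x y, α x * (1 - α y) * ∏ z ∈ (S.erase x).erase y, α z ∈ Set.Icc (0 : ℝ) 1 :=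
    fun x y => unitInterval.mul_mem (unitInterval.mul_mem (hα x)
      (Set.Icc.mem_iff_one_sub_mem.mp (hα y))) (unitInterval.submonoid.prod_mem fun z _ => hα z)
  have hrow : ∀ x, Summable (w x) := fun x => hw ▸
    summable_mul_of_mem_Icc (hasSum_comp_sub_right hp x).summable (fun _ => hp0 _) (hQ x)
  have hcol : ∀ y, Summable (w · y) := fun y => hw ▸
    summable_mul_of_mem_Icc (summable_comp_sub_left hp y) (fun _ => hp0 _) (hQ · y)
  have hterm : ∀ x y, ∫ η, p (y - x) * ind (η x) * (1 - ind (η y))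
      * (occ S (swap η x y) - occ S η) ∂μ
      = (if y ∈ S then w x y else 0) - (if x ∈ S then w x y else 0) := fun x y => by
    simp only [mul_assoc (p (y - x)), integral_const_mul]
    rw [hμ.integral_jump_occ hα, hw]
    split_ifs <;> ring
  have hinner : ∀ x, HasSum (fun y => (if y ∈ S then w x y else 0) - (if x ∈ S then w x y else 0))
      (∑ y ∈ S, w x y - if x ∈ S then ∑' y, w x y else 0) := fun x => by
    refine (hasSum_ite_mem S (w x)).sub ?_
    split_ifs
    exacts [(hrow x).hasSum, hasSum_zero]
  have houter : HasSum (fun x => ∑ y ∈ S, w x y - if x ∈ S then ∑' y, w x y else 0)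
      (∑ y ∈ S, ∑' x, w x y - ∑ x ∈ S, ∑' y, w x y) :=
    (hasSum_sum fun y _ => (hcol y).hasSum).sub (hasSum_ite_mem S _)
  have h0 := hstat _ (isCylinder_occ S)
  rw [integral_gen_eq_tsum hp0 hp (isCylinder_occ S)] at h0
  simp only [hterm, (hinner _).tsum_eq, houter.tsum_eq] at h0
  subst hw
  exact sub_eq_zero.1 h0

include hp0 hp hα in
lemma summable_inflow (w : Zd d) : Summable fun x => p (w - x) * (α x * (1 - α w)) :=
  summable_mul_of_mem_Icc (summable_comp_sub_left hp w) (fun _ => hp0 _) fun x =>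
    unitInterval.mul_mem (hα x) (Set.Icc.mem_iff_one_sub_mem.mp (hα w))

include hp0 hp hα in
lemma summable_outflow (w : Zd d) : Summable fun y => p (y - w) * (α w * (1 - α y)) :=
  summable_mul_of_mem_Icc (hasSum_comp_sub_right hp w).summable (fun _ => hp0 _) fun y =>
    unitInterval.mul_mem (hα w) (Set.Icc.mem_iff_one_sub_mem.mp (hα y))

include hp0 hp hα hμ hstat in
theorem inflow_eq_outflow (w : Zd d) :
    ∑' x, p (w - x) * (α x * (1 - α w)) = ∑' y, p (y - w) * (α w * (1 - α y)) := by
  have hempty : ∀ x, (({w} : Finset (Zd d)).erase x).erase w = ∅ := fun x => by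
    rw [Finset.erase_right_comm]
    simp
  simpa [hempty] using flux_balance hp0 hp hα hμ hstat {w}

include hp0 hp hα hμ hstat in
theorem pair_balance (v w : Zd d) :
    α v = α w ∨ p (w - v) * (α v * (1 - α w)) = p (v - w) * (α w * (1 - α v)) := by
  rcases eq_or_ne v w with h | hvw
  · exact Or.inl (congrArg α h)
  have hflux := flux_balance hp0 hp hα hμ hstat {v, w}
  simp only [Finset.sum_pair hvw, prod_erase_erase_pair α hvw, hvw, hvw.symm, true_or, or_true,
    or_false, false_or, if_true, one_mul, mul_one] at hflux
  rw [tsum_mul_mul_ite_eq (summable_inflow hp0 hp hα v),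
    tsum_mul_mul_ite_eq (summable_inflow hp0 hp hα w),
    tsum_mul_mul_ite_eq (summable_outflow hp0 hp hα v),
    tsum_mul_mul_ite_eq (summable_outflow hp0 hp hα w)] at hflux
  have key : (α v - α w) * (p (w - v) * (α v * (1 - α w)) - p (v - w) * (α w * (1 - α v))) = 0 := by
    linear_combination -hflux + α w * inflow_eq_outflow hp0 hp hα hμ hstat v
      + α v * inflow_eq_outflow hp0 hp hα hμ hstat w
  rcases mul_eq_zero.1 key with h | h
  · exact Or.inl (sub_eq_zero.1 h)
  · exact Or.inr (sub_eq_zero.1 h)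

end Flux

lemma summable_of_tsum_ne_zero {ι : Type*} {f : ι → ℝ} (h : ∑' i, f i ≠ 0) : Summable f :=
  by_contra fun hf => h (tsum_eq_zero_of_not_summable hf)

lemma eq_zero_of_hasSum_zero {ι : Type*} {f : ι → ℝ} (hf : HasSum f 0)
    (hsign : (∀ i, 0 ≤ f i) ∨ ∀ i, f i ≤ 0) : f = 0 := by
  rcases hsign with h | h
  · exact (hasSum_zero_iff_of_nonneg h).1 hf
  · have hneg := (hasSum_zero_iff_of_nonneg fun i => neg_nonneg.2 (h i)).1 (by simpa using hf.neg)
    exact funext fun i => neg_eq_zero.1 (congrFun hneg i)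

lemma eq_mul_zpow_of_forall_add_one {a : ℤ → ℝ} {c : ℝ} (hc : c ≠ 0)
    (h : ∀ n, a (n + 1) = c * a n) (n : ℤ) : a n = a 0 * c ^ n := by
  induction n using Int.induction_on with
  | zero => simp
  | succ n ih => rw [h, ih, zpow_add_one₀ hc]; ring
  | pred n ih =>
    have hn := h (-n - 1)
    rw [sub_add_cancel, ih] at hn
    rw [zpow_sub_one₀ hc, ← mul_assoc, hn]
    field_simp

section Ratio

variable {d : ℕ} {p α : Zd d → ℝ} {μ : Measure (Conf d)}
  (hp0 : ∀ z, 0 ≤ p z) (hp1 : ∑' z, p z = 1) (hα : ∀ x, α x ∈ Set.Ioo 0 1)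
  (hμ : IsProductWith α μ) (hstat : IsStationary p μ)

include hα in
lemma pifun_pos (x : Zd d) : 0 < pifun α x :=
  div_pos (hα x).1 (sub_pos.2 (hα x).2)

include hp0 hp1 hα hμ hstat in
lemma pifun_balance_defect (x y : Zd d) :
    (p (x - y) * pifun α y - p (y - x) * pifun α x) * (1 - α x) ^ 2
      = p (x - y) * (α y * (1 - α x)) - p (y - x) * (α x * (1 - α y)) := by
  have hx : 1 - α x ≠ 0 := (sub_pos.2 (hα x).2).ne'
  have hy : 1 - α y ≠ 0 := (sub_pos.2 (hα y).2).ne'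
  rcases pair_balance hp0 (summable_of_tsum_ne_zero (hp1 ▸ one_ne_zero))
    (fun x => Set.Ioo_subset_Icc_self (hα x)) hμ hstat y x with h | h
  · simp only [pifun, h]
    field_simp
  · simp only [pifun]
    field_simp
    linear_combination (α y - α x) * h

include hp0 hp1 hα hμ hstat in
theorem hasSum_pifun (x : Zd d) : HasSum (fun y => p (x - y) * pifun α y) (pifun α x) := by
  have hp := summable_of_tsum_ne_zero (hp1 ▸ one_ne_zero)
  have hα' : ∀ x, α x ∈ Set.Icc 0 1 := fun x => Set.Ioo_subset_Icc_self (hα x)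
  have hx : (1 - α x) ^ 2 ≠ 0 := pow_ne_zero 2 (sub_pos.2 (hα x).2).ne'
  have hdefect :
      HasSum (fun y => p (x - y) * (α y * (1 - α x)) - p (y - x) * (α x * (1 - α y))) 0 := by
    simpa [inflow_eq_outflow hp0 hp hα' hμ hstat x] using
      (summable_inflow hp0 hp hα' x).hasSum.sub (summable_outflow hp0 hp hα' x).hasSum
  have hout : HasSum (fun y => p (y - x)) 1 := hp1 ▸ hasSum_comp_sub_right hp x
  have hsplit : (fun y => p (x - y) * pifun α y) = fun y => pifun α x * p (y - x)
      + (p (x - y) * (α y * (1 - α x)) - p (y - x) * (α x * (1 - α y))) / (1 - α x) ^ 2 :=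
    funext fun y => by
      rw [← pifun_balance_defect hp0 hp1 hα hμ hstat x y, mul_div_cancel_right₀ _ hx]
      ring
  simpa [hsplit] using (hout.mul_left (pifun α x)).add (hdefect.div_const ((1 - α x) ^ 2))

include hp0 hp1 hα hμ hstat in
lemma pifun_add_eq_or (u y : Zd d) :
    pifun α (y + u) = pifun α y ∨ p (-u) * pifun α (y + u) = p u * pifun α y := by
  have hy : 1 - α y ≠ 0 := (sub_pos.2 (hα y).2).ne'
  have hyu : 1 - α (y + u) ≠ 0 := (sub_pos.2 (hα (y + u)).2).ne'
  rcases pair_balance hp0 (summable_of_tsum_ne_zero (hp1 ▸ one_ne_zero))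
    (fun x => Set.Ioo_subset_Icc_self (hα x)) hμ hstat y (y + u) with h | h
  · exact Or.inl (by rw [pifun, pifun, h])
  · right
    rw [add_sub_cancel_left, sub_add_cancel_left] at h
    simp only [pifun]
    field_simp
    linear_combination -h

include hp0 hp1 hα hμ hstat in
lemma pifun_add_eq_of_pifun_add_eq {u x : Zd d} (hmu : 0 < p (-u))
    (hx : pifun α (x + u) = pifun α x)
    {y : Zd d} (hy : p (x - y) ≠ 0) : pifun α (y + u) = pifun α y := by
  have hsum : HasSum (fun y => p (x - y) * (pifun α (y + u) - pifun α y)) 0 := by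
    have hshift := (Equiv.addRight u).hasSum_iff.mpr (hasSum_pifun hp0 hp1 hα hμ hstat (x + u))
    simpa [mul_sub, hx] using hshift.sub (hasSum_pifun hp0 hp1 hα hμ hstat x)
  have hsign : ∀ y, (p (-u) ≤ p u → pifun α y ≤ pifun α (y + u))
      ∧ (p u ≤ p (-u) → pifun α (y + u) ≤ pifun α y) := fun y => by
    have := pifun_pos hα y
    rcases pifun_add_eq_or hp0 hp1 hα hμ hstat u y with h | h
    · exact ⟨fun _ => h.ge, fun _ => h.le⟩
    · exact ⟨fun hle => le_of_mul_le_mul_left (by nlinarith) hmu,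
        fun hle => le_of_mul_le_mul_left (by nlinarith) hmu⟩
  have hzero := congrFun (eq_zero_of_hasSum_zero hsum ?_) y
  · exact sub_eq_zero.1 ((mul_eq_zero.1 hzero).resolve_left hy)
  rcases le_total (p (-u)) (p u) with h | h
  · exact Or.inl fun y => mul_nonneg (hp0 _) (sub_nonneg.2 ((hsign y).1 h))
  · exact Or.inr fun y => mul_nonpos_of_nonneg_of_nonpos (hp0 _) (sub_nonpos.2 ((hsign y).2 h))

include hp0 hp1 hα hμ hstat in
lemma pifun_add_zsmul_add_eq {u x : Zd d} (hpu : 0 < p u) (hmu : 0 < p (-u))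
    (hx : pifun α (x + u) = pifun α x) (n : ℤ) :
    pifun α (x + n • u + u) = pifun α (x + n • u) := by
  induction n using Int.induction_on with
  | zero => simpa using hx
  | succ n ih =>
    rw [add_zsmul, one_zsmul, ← add_assoc]
    exact pifun_add_eq_of_pifun_add_eq hp0 hp1 hα hμ hstat hmu ih (by simpa using hmu.ne')
  | pred n ih =>
    have hpred : x + (-(n : ℤ) - 1) • u = x + -(n : ℤ) • u - u := by
      rw [sub_zsmul, one_zsmul]
      abel
    rw [hpred]
    exact pifun_add_eq_of_pifun_add_eq hp0 hp1 hα hμ hstat hmu ih (by simpa using hpu.ne')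

include hp0 hp1 hα hμ hstat in
theorem pifun_add_zsmul_eq_or {u : Zd d} (hpu : 0 < p u) (hmu : 0 < p (-u)) (x : Zd d) :
    (∀ n : ℤ, pifun α (x + n • u) = pifun α x) ∨
      ∀ n : ℤ, pifun α (x + n • u) = pifun α x * (p u / p (-u)) ^ n := by
  have hsucc : ∀ n : ℤ, x + (n + 1) • u = x + n • u + u := fun n => by
    rw [add_zsmul, one_zsmul, add_assoc]
  by_cases hx : pifun α (x + u) = pifun α x
  · have hstep : ∀ n : ℤ, pifun α (x + (n + 1) • u) = 1 * pifun α (x + n • u) := fun n => by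
      rw [hsucc, one_mul]
      exact pifun_add_zsmul_add_eq hp0 hp1 hα hμ hstat hpu hmu hx n
    exact Or.inl fun n => by
      simpa using eq_mul_zpow_of_forall_add_one one_ne_zero (a := (pifun α <| x + · • u)) hstep n
  · have hstep : ∀ n : ℤ, pifun α (x + (n + 1) • u) = p u / p (-u) * pifun α (x + n • u) :=
      fun n => by
        have hnot : pifun α (x + n • u + u) ≠ pifun α (x + n • u) := fun h => hx (by
          simpa using pifun_add_zsmul_add_eq hp0 hp1 hα hμ hstat hpu hmu h (-n))
        have h := (pifun_add_eq_or hp0 hp1 hα hμ hstat u (x + n • u)).resolve_left hnot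
        rw [hsucc, div_mul_eq_mul_div, eq_div_iff hmu.ne', mul_comm, h]
    exact Or.inr fun n => by
      simpa using eq_mul_zpow_of_forall_add_one (div_pos hpu hmu).ne'
        (a := (pifun α <| x + · • u)) hstep n

end Ratio

theorem stationary_product_ratio_along_u {d : ℕ} (p : Zd d → ℝ)
    (hp0 : ∀ z, 0 ≤ p z) (hp1 : ∑' z : Zd d, p z = 1)
    (α : Zd d → ℝ) (hα : ∀ x, α x ∈ Set.Ioo (0 : ℝ) 1)
    (μ : Measure (Conf d)) (hμ : IsProductWith α μ) (hstat : IsStationary p μ)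
    (u : Zd d) (hu : 0 < p u) :
    (p (-u) = 0 → ∀ x : Zd d, pifun α (x + u) = pifun α x) ∧
    (0 < p (-u) → ∀ x : Zd d,
      (∀ n : ℤ, pifun α (x + n • u) = pifun α x) ∨
      (∀ n : ℤ, pifun α (x + n • u) = pifun α x * (p u / p (-u)) ^ n)) := by
  refine ⟨fun hmu x => ?_, fun hmu => pifun_add_zsmul_eq_or hp0 hp1 hα hμ hstat hu hmu⟩
  refine (pifun_add_eq_or hp0 hp1 hα hμ hstat u x).resolve_right fun h => ?_
  rw [hmu, zero_mul] at h
  exact (mul_pos hu (pifun_pos hα x)).ne' h.symm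

end ExclusionPaper
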